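/- arXiv:1409.7051 — 3 statements merged into one kernel-verified Lean document; each statement's English description precedes it below -/
import Mathlib

section
/- For an abelian category C, a finitely presented functor F: C^op → Ab with presentation Hom(-,X) → Hom(-,Y) → F → 0 is effaceable (i.e. lies in eff C) if and only if F is annihilated by the left adjoint of the Yoneda embedding, i.e. the morphism X → Y is an epimorphism. -/
/-!
STATEMENT 0: For an abelian category `C`, the left adjoint of the Yoneda embedding
`C ⥤ mod C` (finitely presented additive functors `Cᵒᵖ ⥤ Ab`) exists, is exact,
and sends a functor `F` with presentation `Hom(-,X) → Hom(-,Y) → F → 0`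
to the cokernel of `X ⟶ Y`.
-/

open CategoryTheory CategoryTheory.Limits

universe v u

variable (C : Type u) [Category.{v} C] [Abelian C]

noncomputable instance preadditiveYonedaAdditive :
    (preadditiveYoneda (C := C)).Additive where
  map_add {X Y f g} := by
    ext U (x : Opposite.unop U ⟶ X)
    show x ≫ (f + g) = ((preadditiveYoneda.map f).app U) x + ((preadditiveYoneda.map g).app U) x
    rw [Preadditive.comp_add]; rfl

/-- A functor `F : Cᵒᵖ ⥤ Ab` is finitely presented (coherent) if it admits a presentation
`Hom(-,X) ⟶ Hom(-,Y) ⟶ F ⟶ 0`, i.e. it is isomorphic to the cokernel of a morphism of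
representable functors. -/
def IsFinitelyPresented (F : Cᵒᵖ ⥤ AddCommGrpCat.{v}) : Prop :=
  ∃ (X Y : C) (f : X ⟶ Y), Nonempty (F ≅ cokernel (preadditiveYoneda.map f))

/-- The category `mod C` of finitely presented functors. -/
abbrev ModC := ObjectProperty.FullSubcategory (IsFinitelyPresented C)

lemma isFinitelyPresented_yoneda (X : C) :
    IsFinitelyPresented C (preadditiveYoneda.obj X) :=
  ⟨X, X, 0,
    ⟨((cokernelIsoOfEq (by simp)).trans (cokernelZeroIsoTarget
        (X := preadditiveYoneda.obj X) (Y := preadditiveYoneda.obj X))).symm⟩⟩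

/-- The Yoneda embedding `C ⥤ mod C`. -/
noncomputable def yonedaMod : C ⥤ ModC C :=
  ObjectProperty.lift _ preadditiveYoneda (isFinitelyPresented_yoneda C)

/-- A finitely presented functor is effaceable if it admits a presentation
`Hom(-,X) ⟶ Hom(-,Y) ⟶ F ⟶ 0` with `X ⟶ Y` an epimorphism in `C`. -/
def IsEffaceable (F : Cᵒᵖ ⥤ AddCommGrpCat.{v}) : Prop :=
  ∃ (X Y : C) (f : X ⟶ Y), Epi f ∧ Nonempty (F ≅ cokernel (preadditiveYoneda.map f))

/-!
Maps from `coker(Hom(-,X) ⟶ Hom(-,Y))` to a representable `Hom(-,Z)` are, by Yoneda, the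
`g : Y ⟶ Z` with `f ≫ g = 0`, and by adjunction they are the maps `L F ⟶ Z`. Hence `L F = 0`
and `f` epi both say that all these maps vanish. As `L F` does not depend on the presentation,
this also shows that every presentation of an effaceable functor has an epimorphism.
-/

section

variable {D : Type*} [Category.{v} D] [Preadditive D]

theorem epi_iff_subsingleton_hom_cokernel_preadditiveYoneda_map {X Y : D} (f : X ⟶ Y) :
    Epi f ↔
      ∀ Z : D, Subsingleton (cokernel (preadditiveYoneda.map f) ⟶ preadditiveYoneda.obj Z) := by
  rw [Preadditive.epi_iff_cancel_zero]
  refine forall_congr' fun Z => ⟨fun hf => ⟨fun ψ ψ' => ?_⟩, fun h g hg => ?_⟩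
  · obtain ⟨g, hg⟩ :=
      preadditiveYoneda.map_surjective (cokernel.π (preadditiveYoneda.map f) ≫ (ψ - ψ'))
    have hfg : f ≫ g = 0 := preadditiveYoneda.map_injective (by simp [hg])
    rw [← sub_eq_zero, ← cancel_epi (cokernel.π _), ← hg, hf g hfg, comp_zero, Functor.map_zero]
  · have hfg : preadditiveYoneda.map f ≫ preadditiveYoneda.map g = 0 := by
      rw [← Functor.map_comp, hg, Functor.map_zero]
    have := cokernel.π_desc _ _ hfg
    rw [Subsingleton.elim (cokernel.desc _ _ hfg) 0, comp_zero] at this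
    exact preadditiveYoneda.map_injective (by rw [← this, Functor.map_zero])

end

theorem CategoryTheory.Adjunction.isZero_obj_iff_subsingleton_hom {D E : Type*} [Category D]
    [Category E] [HasZeroMorphisms E] {L : D ⥤ E} {R : E ⥤ D} (adj : L ⊣ R) (A : D) :
    IsZero (L.obj A) ↔ ∀ Z : E, Subsingleton (A ⟶ R.obj Z) := by
  refine ⟨fun h Z => (adj.homEquiv A Z).symm.subsingleton_congr.mpr ⟨h.eq_of_src⟩, fun h => ?_⟩
  have := (adj.homEquiv A (L.obj A)).subsingleton
  exact (IsZero.iff_id_eq_zero _).mpr (Subsingleton.elim _ _)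

theorem isZero_obj_iff_epi_of_iso_cokernel {L : ModC C ⥤ C} (adj : L ⊣ yonedaMod C)
    {F : ModC C} {X Y : C} {f : X ⟶ Y} (e : F.obj ≅ cokernel (preadditiveYoneda.map f)) :
    IsZero (L.obj F) ↔ Epi f := by
  rw [adj.isZero_obj_iff_subsingleton_hom, epi_iff_subsingleton_hom_cokernel_preadditiveYoneda_map]
  exact forall_congr' fun Z =>
    ((ObjectProperty.fullyFaithfulι _).homEquiv.trans (e.homCongr (Iso.refl _))).subsingleton_congr

/-- A finitely presented functor `F` with presentation
`Hom(-,X) ⟶ Hom(-,Y) ⟶ F ⟶ 0` is effaceable if and only if `X ⟶ Y` is an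
epimorphism, if and only if `F` is annihilated by the left adjoint `L` of the
Yoneda embedding. -/
theorem effaceable_iff (L : ModC C ⥤ C) (_ : L ⊣ yonedaMod C)
    (X Y : C) (f : X ⟶ Y) (F : ModC C)
    (_ : F.obj ≅ cokernel (preadditiveYoneda.map f)) :
    (IsEffaceable C F.obj ↔ Epi f) ∧ (IsZero (L.obj F) ↔ Epi f) := by
  rename_i adj e
  have hL := isZero_obj_iff_epi_of_iso_cokernel C adj e
  refine ⟨⟨?_, fun hf => ⟨X, Y, f, hf, ⟨e⟩⟩⟩, hL⟩
  rintro ⟨X', Y', g, hg, ⟨e'⟩⟩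
  exact hL.mp ((isZero_obj_iff_epi_of_iso_cokernel C adj e').mpr hg)
end

section
/- Every finitely presented additive functor F: C^op → Ab on an abelian category C admits a projective resolution of length at most 2 by representable functors: 0 → Hom(-,X) → Hom(-,Y) → Hom(-,Z) → F → 0. -/
/-!
STATEMENT 0: For an abelian category `C`, the left adjoint of the Yoneda embedding
`C ⥤ mod C` (finitely presented additive functors `Cᵒᵖ ⥤ Ab`) exists, is exact,
and sends a functor `F` with presentation `Hom(-,X) → Hom(-,Y) → F → 0`
to the cokernel of `X ⟶ Y`.
-/

open CategoryTheory CategoryTheory.Limits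

universe v u

variable (C : Type u) [Category.{v} C] [Abelian C]

/-! Hom functors `Hom(W, -)` are left exact and limits of functors are computed pointwise, so the
Yoneda embedding is left exact: it turns `ker g ⟶ Y ⟶ Z` into an exact sequence
`0 ⟶ Hom(-, ker g) ⟶ Hom(-, Y) ⟶ Hom(-, Z)`. Splicing this with a presentation
`Hom(-, Y) ⟶ Hom(-, Z) ⟶ F ⟶ 0` gives the resolution. -/

section

variable {D : Type*} [Category* D]

instance preservesFiniteLimits_preadditiveYoneda [Preadditive D] :
    PreservesFiniteLimits (preadditiveYoneda : D ⥤ Dᵒᵖ ⥤ AddCommGrpCat) :=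
  preservesFiniteLimits_of_evaluation _ fun W =>
    preservesFiniteLimits_of_natIso (F := preadditiveCoyoneda.obj W)
      (NatIso.ofComponents (fun _ => Iso.refl _))

lemma exact_preadditiveYoneda_map_kernel [Preadditive D] {Y Z : D} (g : Y ⟶ Z) [HasKernel g]
    (w : preadditiveYoneda.map (kernel.ι g) ≫ preadditiveYoneda.map g = 0) :
    (ShortComplex.mk _ _ w).Exact :=
  ShortComplex.exact_of_f_is_kernel _
    (KernelFork.mapIsLimit _ (kernelIsKernel g) preadditiveYoneda)

lemma exact_cokernel_π_comp_iso [Abelian D] {A B F : D} (φ : A ⟶ B) [HasCokernel φ]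
    (e : F ≅ cokernel φ) (w : φ ≫ cokernel.π φ ≫ e.inv = 0) :
    (ShortComplex.mk _ _ w).Exact :=
  ShortComplex.exact_of_g_is_cokernel _ <|
    (cokernelIsCokernel φ).ofIsoColimit (Cofork.ext e.symm (by simp))

end

/-- Every finitely presented functor `F : Cᵒᵖ ⥤ Ab` on an abelian category admits a
projective resolution of length at most 2 by representable functors:
`0 ⟶ Hom(-,X) ⟶ Hom(-,Y) ⟶ Hom(-,Z) ⟶ F ⟶ 0`. -/
theorem fp_has_length_two_resolution (F : Cᵒᵖ ⥤ AddCommGrpCat.{v})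
    (hF : IsFinitelyPresented C F) :
    ∃ (X Y Z : C) (f : X ⟶ Y) (g : Y ⟶ Z) (p : preadditiveYoneda.obj Z ⟶ F)
      (w₁ : preadditiveYoneda.map f ≫ preadditiveYoneda.map g = 0)
      (w₂ : preadditiveYoneda.map g ≫ p = 0),
      Mono (preadditiveYoneda.map f) ∧ Epi p ∧
      (ShortComplex.mk _ _ w₁).Exact ∧ (ShortComplex.mk _ _ w₂).Exact := by
  obtain ⟨Y, Z, g, ⟨e⟩⟩ := hF
  have w₁ : preadditiveYoneda.map (kernel.ι g) ≫ preadditiveYoneda.map g = 0 := by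
    rw [← Functor.map_comp, kernel.condition, Functor.map_zero]
  have w₂ : preadditiveYoneda.map g ≫ cokernel.π (preadditiveYoneda.map g) ≫ e.inv = 0 := by
    rw [cokernel.condition_assoc, zero_comp]
  exact ⟨kernel g, Y, Z, kernel.ι g, g, _, w₁, w₂, inferInstance, epi_comp _ _,
    exact_preadditiveYoneda_map_kernel g w₁, exact_cokernel_π_comp_iso _ e w₂⟩
end

section
/- Let A be a Grothendieck abelian category, B ⊆ A a localising subcategory with inclusion right adjoint t: A → B. If I is a homotopically minimal complex of injective objects in A, then tI is a homotopically minimal complex of injective objects in B. -/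
/-!
STATEMENT 9: Let `A` be a Grothendieck abelian category and `B ⊆ A` a localising
subcategory with torsion functor `t : A ⥤ B` (right adjoint of the inclusion).
If `I` is a homotopically minimal complex of injectives in `A`, then `tI` is a
homotopically minimal complex of injectives in `B`.
-/

open CategoryTheory CategoryTheory.Limits

universe v u

/-- A morphism `f : X ⟶ I` is an injective envelope if it is an essential
monomorphism into an injective object. -/
def IsInjectiveEnvelope {A : Type*} [Category A] {X I : A} (f : X ⟶ I) : Prop :=
  Mono f ∧ Injective I ∧ ∀ ⦃Z : A⦄ (g : I ⟶ Z), Mono (f ≫ g) → Mono g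

/-- A complex of injectives is homotopically minimal if each inclusion
`Ker dⁿ ⟶ Iⁿ` is an injective envelope. -/
noncomputable def HomotopicallyMinimal {A : Type u} [Category.{v} A] [Abelian A]
    (I : CochainComplex A ℤ) : Prop :=
  ∀ n : ℤ, IsInjectiveEnvelope (kernel.ι (I.d n (n + 1)))

/-!
The counit `tIⁿ → Iⁿ` is a monomorphism, and left exactness of `t` identifies `Ker (t dⁿ)`
with `Ker dⁿ ∩ tIⁿ`. An essential subobject stays essential after intersecting it with any
subobject, so `Ker (t dⁿ) ⊆ tIⁿ` is essential in `A`, hence in `B`, which is closed under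
subobjects. Finally `tIⁿ` is injective in `B` because the left adjoint of `t`, the inclusion,
preserves monomorphisms.
-/

def IsEssential {A : Type*} [Category A] {X Y : A} (f : X ⟶ Y) : Prop :=
  ∀ ⦃Z : A⦄ (g : Y ⟶ Z), Mono (f ≫ g) → Mono g

section Abelian

variable {A : Type*} [Category A] [Abelian A]

lemma IsEssential.eq_zero_of_disjoint {K X N : A} {f : K ⟶ X} (hf : IsEssential f)
    (m : N ⟶ X) [Mono m]
    (hdisj : ∀ ⦃W : A⦄ (a : W ⟶ K) (b : W ⟶ N), a ≫ f = b ≫ m → a = 0) : m = 0 := by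
  have : Mono (f ≫ cokernel.π m) := by
    refine Preadditive.mono_of_cancel_zero _ fun a ha =>
      hdisj a (Abelian.monoLift m (a ≫ f) ?_) ?_
    · rwa [Category.assoc]
    · rw [Abelian.monoLift_comp]
  have := hf _ this
  exact zero_of_comp_mono (cokernel.π m) (cokernel.condition m)

/-- As `e'` is mono, `Ker d'` is the intersection of `Ker d` with the subobject `X'` of `X`. -/
lemma IsEssential.kernel_ι_of_mono_square {X Y X' Y' : A} {d : X ⟶ Y} {d' : X' ⟶ Y'}
    {e : X' ⟶ X} {e' : Y' ⟶ Y} [Mono e] [Mono e'] (w : d' ≫ e' = e ≫ d)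
    (h : IsEssential (kernel.ι d)) : IsEssential (kernel.ι d') := by
  intro Z g hg
  refine Abelian.mono_of_kernel_ι_eq_zero _ (zero_of_comp_mono e ?_)
  refine h.eq_zero_of_disjoint _ fun W a b hab => zero_of_comp_mono (kernel.ι d) ?_
  have hd' : (b ≫ kernel.ι g) ≫ d' = 0 := by
    rw [← cancel_mono e', Category.assoc, Category.assoc, w, ← Category.assoc (kernel.ι g),
      ← Category.assoc b, ← hab, Category.assoc, kernel.condition, comp_zero, zero_comp]
  have hlift : kernel.lift d' _ hd' = 0 :=
    zero_of_comp_mono (kernel.ι d' ≫ g) (by simp)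
  have hb : b ≫ kernel.ι g = 0 := by rw [← kernel.lift_ι d' _ hd', hlift, zero_comp]
  rw [hab, ← Category.assoc, hb, zero_comp]

end Abelian

namespace CategoryTheory.ObjectProperty

variable {A : Type*} [Category A] [Abelian A] (P : ObjectProperty A) [P.IsClosedUnderSubobjects]

instance preservesMonomorphisms_ι_of_isClosedUnderSubobjects : P.ι.PreservesMonomorphisms where
  preserves {X _} f _ := by
    let K : P.FullSubcategory := ⟨kernel f.hom, P.prop_of_mono (kernel.ι f.hom) X.property⟩
    have : (P.homMk (kernel.ι f.hom) : K ⟶ X) = 0 := zero_of_comp_mono f (by ext; simp)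
    exact Abelian.mono_of_kernel_ι_eq_zero _ congr(($this).hom)

lemma mono_counit_app {t : A ⥤ P.FullSubcategory} (adj : P.ι ⊣ t) (X : A) :
    Mono (adj.counit.app X) := by
  let K : P.FullSubcategory :=
    ⟨kernel (adj.counit.app X), P.prop_of_mono (kernel.ι _) (t.obj X).property⟩
  have : (P.homMk (kernel.ι _) : K ⟶ t.obj X) = 0 :=
    (adj.homEquiv K X).symm.injective (by rw [adj.homEquiv_counit, adj.homEquiv_counit]; simp)
  exact Abelian.mono_of_kernel_ι_eq_zero _ congr(($this).hom)

lemma isEssential_of_isEssential_hom {X Y : P.FullSubcategory} {f : X ⟶ Y}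
    (hf : IsEssential f.hom) : IsEssential f := by
  intro Z g hg
  exact P.ι.mono_of_mono_map (hf g.hom (P.ι.map_mono (f ≫ g)))

end CategoryTheory.ObjectProperty

theorem torsion_functor_preserves_homotopically_minimal_general
    -- `A` is a Grothendieck abelian category:
    {A : Type u} [Category.{v} A] [Abelian A]
    -- `B` is a localising subcategory of `A`, given by a predicate `P` closed under
    -- subobjects, quotients, extensions and coproducts:
    (P : A → Prop)
    (hsub : ∀ {X Y : A} (f : X ⟶ Y), Mono f → P Y → P X)
    -- `t` is the right adjoint of the inclusion `B ⥤ A`: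
    (t : A ⥤ ObjectProperty.FullSubcategory P) [t.Additive]
    (adj : ObjectProperty.ι P ⊣ t)
    -- `I` is a homotopically minimal complex of injectives in `A`:
    (I : CochainComplex A ℤ) (hinj : ∀ n : ℤ, Injective (I.X n))
    (hmin : HomotopicallyMinimal I) :
    -- then `tI` is a homotopically minimal complex of injectives in `B`.  We express
    -- this via the complex `tI' = (t ⋙ inclusion).mapHomologicalComplex I` in `A`,
    -- whose terms and the kernels of whose differentials all lie in `B`:
    ∀ n : ℤ,
      letI tI' : CochainComplex A ℤ :=
        ((t ⋙ ObjectProperty.ι P).mapHomologicalComplex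
          (ComplexShape.up ℤ)).obj I
      ∀ (hXn : P (tI'.X n)) (hker : P (kernel (tI'.d n (n + 1)))),
        Injective (⟨tI'.X n, hXn⟩ : ObjectProperty.FullSubcategory P) ∧
        IsInjectiveEnvelope
          (show (⟨kernel (tI'.d n (n + 1)), hker⟩ : ObjectProperty.FullSubcategory P) ⟶
              ⟨tI'.X n, hXn⟩ from ObjectProperty.homMk (kernel.ι (tI'.d n (n + 1)))) := by
  intro n hXn hker
  have : ObjectProperty.IsClosedUnderSubobjects P := ⟨fun f _ hY => hsub f inferInstance hY⟩
  have := ObjectProperty.mono_counit_app P adj (I.X n)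
  have := ObjectProperty.mono_counit_app P adj (I.X (n + 1))
  have := hinj n
  have hinjB : Injective (⟨_, hXn⟩ : ObjectProperty.FullSubcategory P) :=
    Injective.injective_of_adjoint adj (I.X n)
  refine ⟨hinjB, (ObjectProperty.ι P).mono_of_mono_map (show Mono (kernel.ι _) from inferInstance),
    hinjB, ?_⟩
  have hess : IsEssential (kernel.ι ((t ⋙ ObjectProperty.ι P).map (I.d n (n + 1)))) :=
    IsEssential.kernel_ι_of_mono_square (adj.counit.naturality (I.d n (n + 1))) (hmin n).2.2
  exact ObjectProperty.isEssential_of_isEssential_hom P hess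

theorem torsion_functor_preserves_homotopically_minimal
    -- `A` is a Grothendieck abelian category:
    {A : Type u} [Category.{v} A] [Abelian A] [HasColimits A] [AB5 A]
    (G : A) (_ : IsSeparator G)
    -- `B` is a localising subcategory of `A`, given by a predicate `P` closed under
    -- subobjects, quotients, extensions and coproducts:
    (P : A → Prop)
    (hsub : ∀ {X Y : A} (f : X ⟶ Y), Mono f → P Y → P X)
    (hquot : ∀ {X Y : A} (f : X ⟶ Y), Epi f → P X → P Y)
    (hext : ∀ {X Y Z : A} (f : X ⟶ Y) (g : Y ⟶ Z) (w : f ≫ g = 0),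
      (CategoryTheory.ShortComplex.mk f g w).ShortExact → P X → P Z → P Y)
    (hcoprod : ∀ {ι : Type v} (f : ι → A), (∀ i, P (f i)) → P (∐ f))
    -- `t` is the right adjoint of the inclusion `B ⥤ A`:
    (t : A ⥤ ObjectProperty.FullSubcategory P) [t.Additive]
    (adj : ObjectProperty.ι P ⊣ t)
    -- `I` is a homotopically minimal complex of injectives in `A`:
    (I : CochainComplex A ℤ) (hinj : ∀ n : ℤ, Injective (I.X n))
    (hmin : HomotopicallyMinimal I) :
    -- then `tI` is a homotopically minimal complex of injectives in `B`.  We express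
    -- this via the complex `tI' = (t ⋙ inclusion).mapHomologicalComplex I` in `A`,
    -- whose terms and the kernels of whose differentials all lie in `B`:
    ∀ n : ℤ,
      letI tI' : CochainComplex A ℤ :=
        ((t ⋙ ObjectProperty.ι P).mapHomologicalComplex
          (ComplexShape.up ℤ)).obj I
      ∀ (hXn : P (tI'.X n)) (hker : P (kernel (tI'.d n (n + 1)))),
        Injective (⟨tI'.X n, hXn⟩ : ObjectProperty.FullSubcategory P) ∧
        IsInjectiveEnvelope
          (show (⟨kernel (tI'.d n (n + 1)), hker⟩ : ObjectProperty.FullSubcategory P) ⟶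
              ⟨tI'.X n, hXn⟩ from ObjectProperty.homMk (kernel.ι (tI'.d n (n + 1)))) :=
  torsion_functor_preserves_homotopically_minimal_general P hsub t adj I hinj hmin
end
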